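/- arXiv:1909.02252 — 3 statements merged into one kernel-verified Lean document; each statement's English description precedes it below -/
import Mathlib

section
/- Let F be the free group on two generators x and y, and let s ≥ 0 be an integer. Then there is an automorphism φ of F with φ((x^{s+1}y)^2 (x^{s+2}y)^2) = x^2 y^2; consequently the one-relator groups ⟨x, y | (x^{s+1}y)^2(x^{s+2}y)^2⟩ and ⟨x, y | x^2 y^2⟩ are isomorphic. -/
namespace Stmt15Aux

noncomputable def ψ (s : ℤ) : FreeGroup (Fin 2) →* FreeGroup (Fin 2) :=
  FreeGroup.lift ![FreeGroup.of 0 ^ (s + 1) * FreeGroup.of 1,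
    FreeGroup.of 0 ^ (s + 2) * FreeGroup.of 1]

noncomputable def σ (s : ℤ) : FreeGroup (Fin 2) →* FreeGroup (Fin 2) :=
  FreeGroup.lift ![FreeGroup.of 1 * (FreeGroup.of 0)⁻¹,
    (FreeGroup.of 0 * (FreeGroup.of 1)⁻¹) ^ (s + 1) * FreeGroup.of 0]

lemma aux {G : Type*} [Group G] (a b : G) (n : ℤ) :
    (b * a⁻¹) ^ n * (a * b⁻¹) ^ n = 1 := by
  have h : a * b⁻¹ = (b * a⁻¹)⁻¹ := by group
  rw [h, inv_zpow, mul_inv_cancel]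

lemma h0 (s : ℤ) : σ s (FreeGroup.of 0 ^ (s + 1) * FreeGroup.of 1) = FreeGroup.of 0 := by
  simp only [σ, map_mul, map_zpow, FreeGroup.lift_apply_of, Matrix.cons_val_zero,
    Matrix.cons_val_one, Matrix.head_cons]
  rw [← mul_assoc, aux, one_mul]

lemma h1 (s : ℤ) : σ s (FreeGroup.of 0 ^ (s + 2) * FreeGroup.of 1) = FreeGroup.of 1 := by
  simp only [σ, map_mul, map_zpow, FreeGroup.lift_apply_of, Matrix.cons_val_zero,
    Matrix.cons_val_one, Matrix.head_cons]
  have h : (s + 2 : ℤ) = 1 + (s + 1) := by ring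
  rw [h, zpow_add, zpow_one, mul_assoc, ← mul_assoc ((FreeGroup.of 1 * (FreeGroup.of 0)⁻¹) ^ (s + 1)),
    aux, one_mul]
  group

lemma comp1 (s : ℤ) : (ψ s).comp (σ s) = MonoidHom.id _ := by
  apply FreeGroup.ext_hom
  intro a
  fin_cases a <;>
    simp only [ψ, σ, MonoidHom.comp_apply, MonoidHom.id_apply, map_mul, map_zpow, map_inv,
      FreeGroup.lift_apply_of, Matrix.cons_val_zero, Matrix.cons_val_one, Matrix.head_cons,
      Fin.zero_eta, Fin.mk_one] <;> group

lemma comp2 (s : ℤ) : (σ s).comp (ψ s) = MonoidHom.id _ := by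
  apply FreeGroup.ext_hom
  intro a
  fin_cases a <;>
    simp only [ψ, MonoidHom.comp_apply, MonoidHom.id_apply, FreeGroup.lift_apply_of,
      Matrix.cons_val_zero, Matrix.cons_val_one, Matrix.head_cons, Fin.zero_eta, Fin.mk_one]
  · exact h0 s
  · exact h1 s

noncomputable def φ (s : ℤ) : FreeGroup (Fin 2) ≃* FreeGroup (Fin 2) :=
  MonoidHom.toMulEquiv (σ s) (ψ s) (comp1 s) (comp2 s)

lemma φ_apply (s : ℤ) :
    φ s ((FreeGroup.of 0 ^ (s + 1) * FreeGroup.of 1) ^ 2 *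
        (FreeGroup.of 0 ^ (s + 2) * FreeGroup.of 1) ^ 2) =
      FreeGroup.of 0 ^ 2 * FreeGroup.of 1 ^ 2 := by
  show σ s _ = _
  rw [map_mul, map_pow, map_pow, h0, h1]

end Stmt15Aux

theorem stmt_15 (s : ℤ) (hs : 0 ≤ s) :
    (∃ φ : FreeGroup (Fin 2) ≃* FreeGroup (Fin 2),
      φ ((FreeGroup.of 0 ^ (s + 1) * FreeGroup.of 1) ^ 2 *
         (FreeGroup.of 0 ^ (s + 2) * FreeGroup.of 1) ^ 2) =
        FreeGroup.of 0 ^ 2 * FreeGroup.of 1 ^ 2) ∧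
    Nonempty
      (PresentedGroup ({(FreeGroup.of 0 ^ (s + 1) * FreeGroup.of 1) ^ 2 *
          (FreeGroup.of 0 ^ (s + 2) * FreeGroup.of 1) ^ 2} : Set (FreeGroup (Fin 2))) ≃*
       PresentedGroup ({FreeGroup.of 0 ^ 2 * FreeGroup.of 1 ^ 2} :
          Set (FreeGroup (Fin 2)))) := by
  refine ⟨⟨Stmt15Aux.φ s, Stmt15Aux.φ_apply s⟩, ?_⟩
  have hmap : (Subgroup.normalClosure
        ({(FreeGroup.of 0 ^ (s + 1) * FreeGroup.of 1) ^ 2 *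
          (FreeGroup.of 0 ^ (s + 2) * FreeGroup.of 1) ^ 2} : Set (FreeGroup (Fin 2)))).map
        (Stmt15Aux.φ s).toMonoidHom =
      Subgroup.normalClosure ({FreeGroup.of 0 ^ 2 * FreeGroup.of 1 ^ 2} :
        Set (FreeGroup (Fin 2))) := by
    rw [Subgroup.map_normalClosure _ (Stmt15Aux.φ s).toMonoidHom
      (Stmt15Aux.φ s).surjective]
    congr 1
    rw [Set.image_singleton]
    simp only [MulEquiv.coe_toMonoidHom, Stmt15Aux.φ_apply s]
  exact ⟨QuotientGroup.congr _ _ (Stmt15Aux.φ s) hmap⟩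
end

section
/- Let F be the free group on two generators x and y, and let k be any integer. Then the endomorphism of F determined by x ↦ x(xy)^k and y ↦ xy is an automorphism of F. Consequently, for any k ≥ 0, the element (x(xy)^k)^2 (xy)^2 is (2,2) Seifert-fibered, i.e. ⟨x, y | (x(xy)^k)^2(xy)^2⟩ ≅ ⟨x, y | x^2 y^2⟩. -/
theorem stmt_16 (k : ℤ) :
    (∃ φ : FreeGroup (Fin 2) ≃* FreeGroup (Fin 2),
      φ (FreeGroup.of 0) = FreeGroup.of 0 * (FreeGroup.of 0 * FreeGroup.of 1) ^ k ∧
      φ (FreeGroup.of 1) = FreeGroup.of 0 * FreeGroup.of 1) ∧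
    (0 ≤ k →
      Nonempty
        (PresentedGroup ({(FreeGroup.of 0 * (FreeGroup.of 0 * FreeGroup.of 1) ^ k) ^ 2 *
            (FreeGroup.of 0 * FreeGroup.of 1) ^ 2} : Set (FreeGroup (Fin 2))) ≃*
         PresentedGroup ({FreeGroup.of 0 ^ 2 * FreeGroup.of 1 ^ 2} :
            Set (FreeGroup (Fin 2))))) := by
  set a : FreeGroup (Fin 2) := FreeGroup.of 0 with ha
  set b : FreeGroup (Fin 2) := FreeGroup.of 1 with hb
  let f : FreeGroup (Fin 2) →* FreeGroup (Fin 2) :=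
    FreeGroup.lift ![a * (a * b) ^ k, a * b]
  let g : FreeGroup (Fin 2) →* FreeGroup (Fin 2) :=
    FreeGroup.lift ![a * b ^ (-k), b ^ k * a⁻¹ * b]
  have hf0 : f a = a * (a * b) ^ k := by simp [f, ha]
  have hf1 : f b = a * b := by simp [f, hb]
  have hg0 : g a = a * b ^ (-k) := by simp [g, ha]
  have hg1 : g b = b ^ k * a⁻¹ * b := by simp [g, hb]
  have hgf : g.comp f = MonoidHom.id _ := by
    apply FreeGroup.ext_hom
    intro i
    fin_cases i
    · show g (f a) = a
      rw [hf0, map_mul, map_zpow, map_mul, hg0, hg1]; group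
    · show g (f b) = b
      rw [hf1, map_mul, hg0, hg1]; group
  have hfg : f.comp g = MonoidHom.id _ := by
    apply FreeGroup.ext_hom
    intro i
    fin_cases i
    · show f (g a) = a
      rw [hg0, map_mul, map_zpow, hf0, hf1]; group
    · show f (g b) = b
      rw [hg1, map_mul, map_mul, map_zpow, map_inv, hf0, hf1]; group
  let φ : FreeGroup (Fin 2) ≃* FreeGroup (Fin 2) :=
    { toFun := f, invFun := g,
      left_inv := fun w => congrArg (· w) hgf
      right_inv := fun w => congrArg (· w) hfg
      map_mul' := f.map_mul }
  refine ⟨⟨φ, hf0, hf1⟩, fun _ => ?_⟩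
  have key : φ (a ^ 2 * b ^ 2) = (a * (a * b) ^ k) ^ 2 * (a * b) ^ 2 := by
    show f (a ^ 2 * b ^ 2) = _
    rw [map_mul, map_pow, map_pow, hf0, hf1]
  refine ⟨(QuotientGroup.congr _ _ φ ?_).symm⟩
  rw [Subgroup.map_normalClosure _ (φ : FreeGroup (Fin 2) →* FreeGroup (Fin 2)) φ.surjective, Set.image_singleton]
  congr 1
  exact congrArg _ key
end

section
/- Let F be the free group on two generators x and y, let s ≥ 0 be an integer, and set c = x^3 y x^3 in F. Then the two elements A = x c^{s+2} x c^{s+1} and B = x c^{s+1} generate F; consequently {A, B} is a free basis of F and A is a primitive element. -/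
theorem stmt_18 (s : ℤ) (hs : 0 ≤ s) :
    let x : FreeGroup (Fin 2) := FreeGroup.of 0
    let y : FreeGroup (Fin 2) := FreeGroup.of 1
    let c := x ^ 3 * y * x ^ 3
    let A := x * c ^ (s + 2) * x * c ^ (s + 1)
    let B := x * c ^ (s + 1)
    Subgroup.closure {A, B} = (⊤ : Subgroup (FreeGroup (Fin 2))) ∧
    (∃ φ : FreeGroup (Fin 2) ≃* FreeGroup (Fin 2), φ x = A ∧ φ y = B) ∧
    (∃ φ : FreeGroup (Fin 2) ≃* FreeGroup (Fin 2), φ x = A) := by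
  intro x y c A B
  -- target words for the inverse map
  set d : FreeGroup (Fin 2) := y⁻¹ * x * y⁻¹ with hd
  set u : FreeGroup (Fin 2) := y * d ^ (-(s + 1)) with hu
  set v : FreeGroup (Fin 2) := u ^ (-3 : ℤ) * d * u ^ (-3 : ℤ) with hv
  -- forward and backward homomorphisms
  set f : FreeGroup (Fin 2) →* FreeGroup (Fin 2) :=
    FreeGroup.lift (fun i => if i = 0 then A else B) with hf
  set g : FreeGroup (Fin 2) →* FreeGroup (Fin 2) :=
    FreeGroup.lift (fun i => if i = 0 then u else v) with hg
  have hfx : f x = A := by simp [hf, x]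
  have hfy : f y = B := by simp [hf, y]
  have hgx : g x = u := by simp [hg, x]
  have hgy : g y = v := by simp [hg, y]
  have hfd : f d = c := by
    rw [hd]
    simp only [map_mul, map_inv, hfx, hfy]
    show B⁻¹ * A * B⁻¹ = c
    rw [show A = x * c ^ (s + 2) * x * c ^ (s + 1) from rfl,
        show B = x * c ^ (s + 1) from rfl]
    group
  have hfu : f u = x := by
    rw [hu]
    simp only [map_mul, map_zpow, hfy, hfd]
    rw [show B = x * c ^ (s + 1) from rfl]
    group
  have hfv : f v = y := by
    rw [hv]
    simp only [map_mul, map_zpow, hfu, hfd]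
    rw [show c = x ^ 3 * y * x ^ 3 from rfl]
    group
  have hgc : g c = u ^ 3 * v * u ^ 3 := by
    rw [show c = x ^ 3 * y * x ^ 3 from rfl]
    simp only [map_mul, map_pow, hgx, hgy]
  have hgcd : u ^ 3 * v * u ^ 3 = d := by rw [hv]; group
  have hgA : g A = x := by
    rw [show A = x * c ^ (s + 2) * x * c ^ (s + 1) from rfl]
    simp only [map_mul, map_zpow, hgx, hgc, hgcd]
    rw [hu, hd]
    group
  have hgB : g B = y := by
    rw [show B = x * c ^ (s + 1) from rfl]
    simp only [map_mul, map_zpow, hgx, hgc, hgcd]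
    rw [hu]
    group
  have hgf : g.comp f = MonoidHom.id _ := by
    apply FreeGroup.ext_hom
    intro i
    fin_cases i
    · simp only [MonoidHom.comp_apply, MonoidHom.id_apply]
      show g (f x) = x
      rw [hfx, hgA]
    · simp only [MonoidHom.comp_apply, MonoidHom.id_apply]
      show g (f y) = y
      rw [hfy, hgB]
  have hfg : f.comp g = MonoidHom.id _ := by
    apply FreeGroup.ext_hom
    intro i
    fin_cases i
    · simp only [MonoidHom.comp_apply, MonoidHom.id_apply]
      show f (g x) = x
      rw [hgx, hfu]
    · simp only [MonoidHom.comp_apply, MonoidHom.id_apply]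
      show f (g y) = y
      rw [hgy, hfv]
  have hgf' : ∀ z, g (f z) = z := fun z => congrArg (· z) hgf
  have hfg' : ∀ z, f (g z) = z := fun z => congrArg (· z) hfg
  refine ⟨?_, ⟨⟨⟨f, g, hgf', hfg'⟩, map_mul f⟩, hfx, hfy⟩,
    ⟨⟨⟨f, g, hgf', hfg'⟩, map_mul f⟩, hfx⟩⟩
  -- closure
  have hA : A ∈ Subgroup.closure ({A, B} : Set (FreeGroup (Fin 2))) :=
    Subgroup.subset_closure (by simp)
  have hB : B ∈ Subgroup.closure ({A, B} : Set (FreeGroup (Fin 2))) :=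
    Subgroup.subset_closure (by simp)
  have hcAB : c = B⁻¹ * A * B⁻¹ := by
    rw [show A = x * c ^ (s + 2) * x * c ^ (s + 1) from rfl,
        show B = x * c ^ (s + 1) from rfl]
    group
  have hc : c ∈ Subgroup.closure ({A, B} : Set (FreeGroup (Fin 2))) := by
    rw [hcAB]; exact mul_mem (mul_mem (inv_mem hB) hA) (inv_mem hB)
  have hxeq : x = B * c ^ (-(s + 1)) := by
    rw [show B = x * c ^ (s + 1) from rfl]; group
  have hx : x ∈ Subgroup.closure ({A, B} : Set (FreeGroup (Fin 2))) := by
    rw [hxeq]; exact mul_mem hB (zpow_mem hc _)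
  have hyeq : y = x⁻¹ ^ 3 * c * x⁻¹ ^ 3 := by
    rw [show c = x ^ 3 * y * x ^ 3 from rfl]; group
  have hy : y ∈ Subgroup.closure ({A, B} : Set (FreeGroup (Fin 2))) := by
    rw [hyeq]; exact mul_mem (mul_mem (pow_mem (inv_mem hx) 3) hc) (pow_mem (inv_mem hx) 3)
  rw [eq_top_iff, ← FreeGroup.closure_range_of (Fin 2)]
  apply Subgroup.closure_le _ |>.mpr
  rintro _ ⟨i, rfl⟩
  fin_cases i
  · exact hx
  · exact hy
end
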